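/- Let f : Ω → ℝ be a smooth function on an open set Ω ⊆ ℝ², and suppose the norm of the second fundamental form of the graph of f is bounded by A on Ω, with f(x₀) and ∇f(x₀) given at some x₀ ∈ Ω. Then for any x ∈ Ω joined to x₀ by a line segment of length L in Ω, the angle between the tangent planes of the graph at (x, f(x)) and (x₀, f(x₀)) is at most A·L·√(1 + |∇f|_∞²) along the segment; in particular, if A·L is sufficiently small, the two tangent planes make an angle at most π/20. -/

import Mathlib

open Filter Metric Module Set
open scoped Topology RealInnerProductSpace

lemma aux_dual_norm_sq (ℓ : EuclideanSpace ℝ (Fin 2) →L[ℝ] ℝ) :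
    ‖ℓ‖ ^ 2 = ℓ (EuclideanSpace.single 0 1) ^ 2 + ℓ (EuclideanSpace.single 1 1) ^ 2 := by
  set v : EuclideanSpace ℝ (Fin 2) := (InnerProductSpace.toDual ℝ _).symm ℓ with hv
  have hnorm : ‖ℓ‖ = ‖v‖ := ((InnerProductSpace.toDual ℝ _).symm.norm_map ℓ).symm
  have happ : ∀ i : Fin 2, ℓ (EuclideanSpace.single i 1) = v i := by
    intro i
    rw [← InnerProductSpace.toDual_symm_apply (𝕜 := ℝ), ← hv,
      EuclideanSpace.inner_single_right]
    simp
  rw [hnorm, happ 0, happ 1, EuclideanSpace.norm_eq]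
  rw [Real.sq_sqrt (by positivity)]
  simp [Fin.sum_univ_two, sq_abs]

lemma aux_norm_N_eq_one (f : EuclideanSpace ℝ (Fin 2) → ℝ) (y : EuclideanSpace ℝ (Fin 2)) :
    ‖(Real.sqrt (1 + ‖fderiv ℝ f y‖ ^ 2))⁻¹ •
      (WithLp.equiv 2 (Fin 3 → ℝ)).symm
        ![-(fderiv ℝ f y (EuclideanSpace.single 0 1)),
          -(fderiv ℝ f y (EuclideanSpace.single 1 1)), 1]‖ = 1 := by
  set a := fderiv ℝ f y (EuclideanSpace.single 0 1)
  set b := fderiv ℝ f y (EuclideanSpace.single 1 1)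
  have hsq : ‖fderiv ℝ f y‖ ^ 2 = a ^ 2 + b ^ 2 := aux_dual_norm_sq _
  have hvec : ‖(WithLp.equiv 2 (Fin 3 → ℝ)).symm ![-a, -b, 1]‖
      = Real.sqrt (1 + (a ^ 2 + b ^ 2)) := by
    rw [EuclideanSpace.norm_eq]
    congr 1
    simp [Fin.sum_univ_three, sq_abs]
    ring
  have hpos : 0 < Real.sqrt (1 + ‖fderiv ℝ f y‖ ^ 2) := Real.sqrt_pos.2 (by positivity)
  rw [norm_smul, hvec, ← hsq, norm_inv, Real.norm_eq_abs, abs_of_pos hpos,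
    inv_mul_cancel₀ hpos.ne']

lemma aux_N_differentiableAt {Ω : Set (EuclideanSpace ℝ (Fin 2))} (hΩ : IsOpen Ω)
    {f : EuclideanSpace ℝ (Fin 2) → ℝ} (hf : ContDiffOn ℝ (⊤ : ℕ∞) f Ω)
    {N : EuclideanSpace ℝ (Fin 2) → EuclideanSpace ℝ (Fin 3)}
    (hN : ∀ x, N x = (Real.sqrt (1 + ‖fderiv ℝ f x‖ ^ 2))⁻¹ •
      (WithLp.equiv 2 (Fin 3 → ℝ)).symm
        ![-(fderiv ℝ f x (EuclideanSpace.single 0 1)),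
          -(fderiv ℝ f x (EuclideanSpace.single 1 1)), 1])
    {y : EuclideanSpace ℝ (Fin 2)} (hy : y ∈ Ω) :
    DifferentiableAt ℝ N y := by
  have hNfun : N = fun z => (Real.sqrt (1 + ‖fderiv ℝ f z‖ ^ 2))⁻¹ •
      (WithLp.equiv 2 (Fin 3 → ℝ)).symm
        ![-(fderiv ℝ f z (EuclideanSpace.single 0 1)),
          -(fderiv ℝ f z (EuclideanSpace.single 1 1)), 1] := funext hN
  rw [hNfun]
  have hd : ContDiffAt ℝ (⊤ : ℕ∞) (fderiv ℝ f) y :=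
    (hf.fderiv_of_isOpen hΩ (by simp)).contDiffAt (hΩ.mem_nhds hy)
  have ha : ContDiffAt ℝ (⊤ : ℕ∞) (fun z => fderiv ℝ f z (EuclideanSpace.single 0 1)) y :=
    hd.clm_apply contDiffAt_const
  have hb : ContDiffAt ℝ (⊤ : ℕ∞) (fun z => fderiv ℝ f z (EuclideanSpace.single 1 1)) y :=
    hd.clm_apply contDiffAt_const
  have hnormsq : (fun z => 1 + ‖fderiv ℝ f z‖ ^ 2) = fun z =>
      1 + (fderiv ℝ f z (EuclideanSpace.single 0 1) ^ 2
        + fderiv ℝ f z (EuclideanSpace.single 1 1) ^ 2) := by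
    funext z; rw [aux_dual_norm_sq]
  have hs : ContDiffAt ℝ (⊤ : ℕ∞) (fun z => 1 + ‖fderiv ℝ f z‖ ^ 2) y := by
    rw [hnormsq]
    exact contDiffAt_const.add ((ha.pow 2).add (hb.pow 2))
  have hspos : (0:ℝ) < 1 + ‖fderiv ℝ f y‖ ^ 2 := by positivity
  have hsqrt : ContDiffAt ℝ (⊤ : ℕ∞) (fun z => Real.sqrt (1 + ‖fderiv ℝ f z‖ ^ 2)) y :=
    hs.sqrt hspos.ne'
  have hsqrtpos : (0:ℝ) < Real.sqrt (1 + ‖fderiv ℝ f y‖ ^ 2) := Real.sqrt_pos.2 hspos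
  have hinv : ContDiffAt ℝ (⊤ : ℕ∞) (fun z => (Real.sqrt (1 + ‖fderiv ℝ f z‖ ^ 2))⁻¹) y :=
    hsqrt.inv hsqrtpos.ne'
  have hvecpi : ContDiffAt ℝ (⊤ : ℕ∞) (fun z => (![-(fderiv ℝ f z (EuclideanSpace.single 0 1)),
      -(fderiv ℝ f z (EuclideanSpace.single 1 1)), 1] : Fin 3 → ℝ)) y := by
    rw [contDiffAt_pi]
    intro i
    fin_cases i
    · simpa using ha.neg
    · simpa using hb.neg
    · simpa using contDiffAt_const (c := (1:ℝ))
  have hvec : ContDiffAt ℝ (⊤ : ℕ∞) (fun z => (WithLp.equiv 2 (Fin 3 → ℝ)).symm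
      ![-(fderiv ℝ f z (EuclideanSpace.single 0 1)),
        -(fderiv ℝ f z (EuclideanSpace.single 1 1)), 1]) y := by
    exact (((EuclideanSpace.equiv (Fin 3) ℝ).symm : (Fin 3 → ℝ) →L[ℝ]
      EuclideanSpace ℝ (Fin 3)).contDiff.contDiffAt).comp y hvecpi
  exact (hinv.smul hvec).differentiableAt (by simp)

lemma aux_cos_comparison_aux {F F' : ℝ → ℝ} {K c k : ℝ} (hK0 : 0 ≤ K)
    (hc : 0 < c) (hKk : K < k) (hck : c + k < Real.pi)
    (hF : ∀ t ∈ Icc (0:ℝ) 1, HasDerivAt F (F' t) t)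
    (hF0 : F 0 = 1)
    (hbound : ∀ t ∈ Icc (0:ℝ) 1, |F' t| ≤ K * Real.sqrt (1 - F t ^ 2)) :
    Real.cos (c + k) ≤ F 1 := by
  have hgderiv : ∀ t : ℝ, HasDerivAt (fun t => Real.cos (c + t * k))
      (-Real.sin (c + t * k) * k) t := by
    intro t
    have h1 : HasDerivAt (fun t : ℝ => c + t * k) k t := by
      simpa using (hasDerivAt_mul_const k).const_add c
    exact (Real.hasDerivAt_cos _).comp t h1
  have main := image_le_of_deriv_right_lt_deriv_boundary'
    (f := fun t => Real.cos (c + t * k)) (f' := fun t => -Real.sin (c + t * k) * k)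
    (a := (0:ℝ)) (b := 1) (B := F) (B' := F')
    (fun t _ => (hgderiv t).continuousAt.continuousWithinAt)
    (fun t _ => (hgderiv t).hasDerivWithinAt)
    (by simpa [hF0] using Real.cos_le_one c)
    (fun t ht => (hF t ht).continuousAt.continuousWithinAt)
    (fun t ht => (hF t (Ico_subset_Icc_self ht)).hasDerivWithinAt)
    ?_ (right_mem_Icc.2 zero_le_one)
  · simpa using main
  · intro t ht heq
    have ht' : t ∈ Icc (0:ℝ) 1 := Ico_subset_Icc_self ht
    have hk0 : 0 < k := lt_of_le_of_lt hK0 hKk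
    have hθ0 : 0 < c + t * k := by nlinarith [ht.1]
    have hθπ : c + t * k < Real.pi := by nlinarith [ht.2.le, ht.1]
    have hsin : 0 < Real.sin (c + t * k) := Real.sin_pos_of_pos_of_lt_pi hθ0 hθπ
    have hsqrt : Real.sqrt (1 - F t ^ 2) = Real.sin (c + t * k) := by
      rw [← heq, ← Real.sin_sq, Real.sqrt_sq hsin.le]
    have hb := hbound t ht'
    rw [hsqrt] at hb
    have h1 : -(K * Real.sin (c + t * k)) ≤ F' t := neg_le_of_abs_le hb
    show -Real.sin (c + t * k) * k < F' t
    nlinarith [mul_pos (sub_pos.2 hKk) hsin]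

lemma aux_cos_comparison {F F' : ℝ → ℝ} {K : ℝ} (hK0 : 0 ≤ K) (hKlt : K < Real.pi / 2)
    (hF : ∀ t ∈ Icc (0:ℝ) 1, HasDerivAt F (F' t) t)
    (hF0 : F 0 = 1)
    (hbound : ∀ t ∈ Icc (0:ℝ) 1, |F' t| ≤ K * Real.sqrt (1 - F t ^ 2)) :
    Real.cos K ≤ F 1 := by
  have key : ∀ δ ∈ Ioo (0:ℝ) (Real.pi / 2), Real.cos (K + δ) ≤ F 1 := by
    intro δ hδ
    have := aux_cos_comparison_aux (c := δ / 2) (k := K + δ / 2) hK0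
      (by linarith [hδ.1]) (by linarith [hδ.1]) (by linarith [hδ.2, hKlt])
      hF hF0 hbound
    have harg : δ / 2 + (K + δ / 2) = K + δ := by ring
    rwa [harg] at this
  have htend : Tendsto (fun δ : ℝ => Real.cos (K + δ)) (𝓝[>] 0) (𝓝 (Real.cos K)) := by
    have hcont : Continuous fun δ : ℝ => Real.cos (K + δ) := by continuity
    exact (hcont.tendsto' 0 _ (by simp)).mono_left nhdsWithin_le_nhds
  refine le_of_tendsto htend ?_
  filter_upwards [Ioo_mem_nhdsGT_of_mem
    (by constructor <;> [rfl; positivity] : (0:ℝ) ∈ Ico 0 (Real.pi/2))] with δ hδ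
  exact key δ hδ


noncomputable def projOp {E : Type*} [NormedAddCommGroup E] [InnerProductSpace ℝ E]
    [FiniteDimensional ℝ E] (L : Submodule ℝ E) : E →L[ℝ] E :=
  L.subtypeL.comp (L.orthogonalProjectionOnto)

/-- Curvature bound implies tangent-plane angle bound for minimal-surface-type graphs:
if the unit normal `N` of the graph of `f` has derivative bounded by
`A·√(1+|∇f|²)` (i.e. the second fundamental form is bounded by `A`), then along a segment
of length `L` in `Ω` on which `|∇f| ≤ M`, the angle between the tangent planes (equal to
the angle between the normal lines) at the endpoints is at most `A·L·√(1+M²)`; in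
particular it is at most `π/20` once `A·L·√(1+M²) ≤ π/20`. -/
theorem angle_bound_of_curvature_bound
    (Ω : Set (EuclideanSpace ℝ (Fin 2))) (hΩ : IsOpen Ω)
    (f : EuclideanSpace ℝ (Fin 2) → ℝ) (hf : ContDiffOn ℝ (⊤ : ℕ∞) f Ω)
    (N : EuclideanSpace ℝ (Fin 2) → EuclideanSpace ℝ (Fin 3))
    (hN : ∀ x, N x = (Real.sqrt (1 + ‖fderiv ℝ f x‖ ^ 2))⁻¹ •
      (WithLp.equiv 2 (Fin 3 → ℝ)).symm
        ![-(fderiv ℝ f x (EuclideanSpace.single 0 1)),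
          -(fderiv ℝ f x (EuclideanSpace.single 1 1)), 1])
    (A M : ℝ) (hA : 0 ≤ A) (hM : 0 ≤ M)
    (hSFF : ∀ x ∈ Ω, ‖fderiv ℝ N x‖ ≤ A * Real.sqrt (1 + ‖fderiv ℝ f x‖ ^ 2))
    (x₀ x : EuclideanSpace ℝ (Fin 2)) (hx₀ : x₀ ∈ Ω) (hx : x ∈ Ω)
    (hseg : segment ℝ x₀ x ⊆ Ω)
    (hgrad : ∀ y ∈ segment ℝ x₀ x, ‖fderiv ℝ f y‖ ≤ M) :
    Real.arccos (abs ⟪N x, N x₀⟫) ≤ A * ‖x - x₀‖ * Real.sqrt (1 + M ^ 2) ∧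
    (A * ‖x - x₀‖ * Real.sqrt (1 + M ^ 2) ≤ Real.pi / 20 →
      Real.arccos (abs ⟪N x, N x₀⟫) ≤ Real.pi / 20) := by
  set K : ℝ := A * ‖x - x₀‖ * Real.sqrt (1 + M ^ 2) with hKdef
  have hK0 : 0 ≤ K := by positivity
  have hunit : ∀ y, ‖N y‖ = 1 := by
    intro y; rw [hN y]; exact aux_norm_N_eq_one f y
  have main : Real.arccos (abs ⟪N x, N x₀⟫) ≤ K := by
    rcases le_or_gt (Real.pi / 2) K with hK | hK
    · exact le_trans (Real.arccos_le_pi_div_two.2 (abs_nonneg _)) hK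
    -- now K < π/2
    · set γ : ℝ → EuclideanSpace ℝ (Fin 2) := fun t => x₀ + t • (x - x₀) with hγdef
      have hγseg : ∀ t ∈ Icc (0:ℝ) 1, γ t ∈ segment ℝ x₀ x := by
        intro t ht
        rw [segment_eq_image']
        exact ⟨t, ht, rfl⟩
      have hγΩ : ∀ t ∈ Icc (0:ℝ) 1, γ t ∈ Ω := fun t ht => hseg (hγseg t ht)
      set F : ℝ → ℝ := fun t => ⟪N (γ t), N x₀⟫ with hFdef
      set F' : ℝ → ℝ := fun t => ⟪fderiv ℝ N (γ t) (x - x₀), N x₀⟫ with hF'def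
      have hγd : ∀ t : ℝ, HasDerivAt γ (x - x₀) t := by
        intro t
        have := ((hasDerivAt_id t).smul_const (x - x₀)).const_add x₀
        rw [one_smul] at this
        exact this
      have hNd : ∀ t ∈ Icc (0:ℝ) 1, HasFDerivAt N (fderiv ℝ N (γ t)) (γ t) := fun t ht =>
        (aux_N_differentiableAt hΩ hf hN (hγΩ t ht)).hasFDerivAt
      have hFderiv : ∀ t ∈ Icc (0:ℝ) 1, HasDerivAt F (F' t) t := by
        intro t ht
        have hcomp : HasDerivAt (fun s => N (γ s)) (fderiv ℝ N (γ t) (x - x₀)) t :=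
          (hNd t ht).comp_hasDerivAt t (hγd t)
        have := hcomp.inner ℝ (hasDerivAt_const t (N x₀))
        simpa [hFdef, hF'def] using this
      have hF0 : F 0 = 1 := by
        have hγ0 : γ 0 = x₀ := by simp [hγdef]
        simp only [hFdef, hγ0, real_inner_self_eq_norm_sq, hunit x₀]
        norm_num
      have horth : ∀ t ∈ Icc (0:ℝ) 1, ⟪fderiv ℝ N (γ t) (x - x₀), N (γ t)⟫ = 0 := by
        intro t ht
        have hconst : (fun z => ⟪N z, N z⟫) = fun _ => (1:ℝ) := by
          funext z
          rw [real_inner_self_eq_norm_sq, hunit z]; norm_num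
        have H1 := (hNd t ht).inner ℝ (hNd t ht)
        have H2 : HasFDerivAt (fun z => ⟪N z, N z⟫) (0 : EuclideanSpace ℝ (Fin 2) →L[ℝ] ℝ)
            (γ t) := by
          rw [hconst]; exact hasFDerivAt_const 1 (γ t)
        have := H1.unique H2
        have happ := DFunLike.congr_fun this (x - x₀)
        simp only [ContinuousLinearMap.comp_apply, ContinuousLinearMap.prod_apply,
          fderivInnerCLM_apply, ContinuousLinearMap.zero_apply] at happ
        have hcomm := real_inner_comm (N (γ t)) (fderiv ℝ N (γ t) (x - x₀))
        linarith [happ, hcomm]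
      have hbound : ∀ t ∈ Icc (0:ℝ) 1, |F' t| ≤ K * Real.sqrt (1 - F t ^ 2) := by
        intro t ht
        set u := fderiv ℝ N (γ t) (x - x₀) with hu
        set w := N x₀ - F t • N (γ t) with hw
        have h1 : F' t = ⟪u, w⟫ := by
          simp only [hF'def, hw, inner_sub_right, real_inner_smul_right, horth t ht, hu]
          ring
        have hwnorm : ‖w‖ = Real.sqrt (1 - F t ^ 2) := by
          have e1 : ⟪N x₀, N x₀⟫ = 1 := by
            rw [real_inner_self_eq_norm_sq, hunit]; try norm_num
          have e2 : ⟪N (γ t), N (γ t)⟫ = 1 := by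
            rw [real_inner_self_eq_norm_sq, hunit]; try norm_num
          have e3 : ⟪N (γ t), N x₀⟫ = F t := rfl
          have e4 : ⟪N x₀, N (γ t)⟫ = F t := by rw [real_inner_comm]; try exact e3
          have hwsq : ⟪w, w⟫ = 1 - F t ^ 2 := by
            rw [hw]
            simp only [inner_sub_left, inner_sub_right, real_inner_smul_left,
              real_inner_smul_right, e1, e2, e3, e4]
            ring
          rw [norm_eq_sqrt_real_inner, hwsq]
        have hub : ‖u‖ ≤ K := by
          have h2 : ‖u‖ ≤ ‖fderiv ℝ N (γ t)‖ * ‖x - x₀‖ :=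
            (fderiv ℝ N (γ t)).le_opNorm _
          have h3 : ‖fderiv ℝ N (γ t)‖ ≤ A * Real.sqrt (1 + ‖fderiv ℝ f (γ t)‖ ^ 2) :=
            hSFF _ (hγΩ t ht)
          have h4 : Real.sqrt (1 + ‖fderiv ℝ f (γ t)‖ ^ 2) ≤ Real.sqrt (1 + M ^ 2) := by
            apply Real.sqrt_le_sqrt
            have := hgrad _ (hγseg t ht)
            nlinarith [norm_nonneg (fderiv ℝ f (γ t))]
          calc ‖u‖ ≤ ‖fderiv ℝ N (γ t)‖ * ‖x - x₀‖ := h2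
            _ ≤ (A * Real.sqrt (1 + M ^ 2)) * ‖x - x₀‖ := by
                apply mul_le_mul_of_nonneg_right _ (norm_nonneg _)
                exact h3.trans (mul_le_mul_of_nonneg_left h4 hA)
            _ = K := by rw [hKdef]; ring
        calc |F' t| = |⟪u, w⟫| := by rw [h1]
          _ ≤ ‖u‖ * ‖w‖ := abs_real_inner_le_norm _ _
          _ ≤ K * Real.sqrt (1 - F t ^ 2) := by
              rw [hwnorm]
              exact mul_le_mul_of_nonneg_right hub (Real.sqrt_nonneg _)
      have hcos := aux_cos_comparison hK0 hK hFderiv hF0 hbound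
      have hγ1 : γ 1 = x := by simp [hγdef]
      have hF1 : F 1 = ⟪N x, N x₀⟫ := by rw [hFdef]; simp [hγ1]
      have hcK : Real.cos K ≤ |⟪N x, N x₀⟫| := le_trans (hF1 ▸ hcos) (le_abs_self _)
      have h5 : Real.arcsin (Real.cos K) = Real.pi / 2 - K := by
        rw [← Real.sin_pi_div_two_sub, Real.arcsin_sin (by linarith) (by linarith)]
      rw [Real.arccos_eq_pi_div_two_sub_arcsin]
      have h6 := Real.monotone_arcsin hcK
      rw [h5] at h6
      linarith
  refine ⟨main, fun h => main.trans h⟩
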